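/- For γ ∈ (0,1) and every fixed integer ξ ≥ 1, the distribution of the number of occupied boxes of the one-parameter Gnedin–Fisher model converges as n → ∞: lim_{n→∞} C(n,ξ) · (1−γ)_{ξ−1} · (γ)_{n−ξ} / (1+γ)_{n−1} = γ·(1−γ)_{ξ−1}/ξ!, where C(n,ξ) is the binomial coefficient. -/

import Mathlib

open Filter

/-- Rising factorial `(x)_m = x (x+1) ⋯ (x+m-1)`, with `(x)_0 = 1`. -/
noncomputable def riseFact (x : ℝ) (m : ℕ) : ℝ := ∏ i ∈ Finset.range m, (x + i)

lemma riseFact_pos {x : ℝ} (hx : 0 < x) (m : ℕ) : 0 < riseFact x m := by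
  apply Finset.prod_pos
  intro i _
  positivity

lemma ratio_tendsto (a b : ℝ) :
    Tendsto (fun n : ℕ => ((n : ℝ) + a) / ((n : ℝ) + b)) atTop (nhds 1) := by
  have hb : Tendsto (fun n : ℕ => ((n : ℝ) + b)) atTop atTop :=
    tendsto_atTop_add_const_right _ b tendsto_natCast_atTop_atTop
  have h0 : Tendsto (fun n : ℕ => (a - b) / ((n : ℝ) + b)) atTop (nhds 0) :=
    Tendsto.div_atTop tendsto_const_nhds hb
  have h1 : Tendsto (fun n : ℕ => 1 + (a - b) / ((n : ℝ) + b)) atTop (nhds 1) := by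
    simpa using (tendsto_const_nhds (x := (1:ℝ))).add h0
  apply h1.congr'
  filter_upwards [hb.eventually (eventually_gt_atTop 0)] with n hn
  have hne : ((n : ℝ) + b) ≠ 0 := ne_of_gt hn
  field_simp
  ring

/-- The law of the number of occupied boxes of the one-parameter Gnedin–Fisher model
converges, as `n → ∞`, to the mixing law `γ (1-γ)_{ξ-1} / ξ!`. -/
theorem gnedin_fisher_blocks_limit (γ : ℝ) (hγ0 : 0 < γ) (hγ1 : γ < 1)
    (ξ : ℕ) (hξ : 1 ≤ ξ) :
    Tendsto
      (fun n : ℕ =>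
        (n.choose ξ : ℝ) * riseFact (1 - γ) (ξ - 1) * riseFact γ (n - ξ) /
          riseFact (1 + γ) (n - 1))
      atTop (nhds (γ * riseFact (1 - γ) (ξ - 1) / (Nat.factorial ξ : ℝ))) := by
  set A : ℝ := riseFact (1 - γ) (ξ - 1) with hA
  set L : ℝ := γ * A / (Nat.factorial ξ : ℝ) with hL
  -- the auxiliary product tending to 1
  have hg : Tendsto (fun n : ℕ => ∏ i ∈ Finset.range ξ,
      (((n : ℝ) - i) / ((n : ℝ) - ξ + γ + i))) atTop (nhds 1) := by
    have := tendsto_finset_prod (Finset.range ξ)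
      (f := fun (i : ℕ) (n : ℕ) => ((n : ℝ) - i) / ((n : ℝ) - ξ + γ + i))
      (x := atTop) (a := fun _ => (1:ℝ)) ?_
    · simpa using this
    · intro i _
      have := ratio_tendsto (-(i : ℝ)) (γ - ξ + i)
      apply this.congr
      intro n
      ring_nf
  have hlim : Tendsto (fun n : ℕ => L * ∏ i ∈ Finset.range ξ,
      (((n : ℝ) - i) / ((n : ℝ) - ξ + γ + i))) atTop (nhds L) := by
    simpa using hg.const_mul L
  apply hlim.congr'
  filter_upwards [eventually_ge_atTop ξ] with n hn
  have hn1 : 1 ≤ n := le_trans hξ hn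
  have hcast : ((n - ξ : ℕ) : ℝ) = (n : ℝ) - ξ := by
    exact Nat.cast_sub hn
  set P : ℝ := ∏ i ∈ Finset.range ξ, ((n : ℝ) - i) with hP
  set Q : ℝ := ∏ i ∈ Finset.range ξ, ((n : ℝ) - ξ + γ + i) with hQ
  set R : ℝ := riseFact γ (n - ξ) with hR
  -- choose as product
  have hchoose : (n.choose ξ : ℝ) = P / (Nat.factorial ξ : ℝ) := by
    have h1 : n.descFactorial ξ = Nat.factorial ξ * n.choose ξ :=
      Nat.descFactorial_eq_factorial_mul_choose n ξ
    have h2 : ((n.descFactorial ξ : ℕ) : ℝ) = P := by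
      rw [Nat.descFactorial_eq_prod_range]
      push_cast
      apply Finset.prod_congr rfl
      intro i hi
      have : i ≤ n := le_trans (le_of_lt (Finset.mem_range.mp hi)) hn
      rw [Nat.cast_sub this]
    have hfac : (Nat.factorial ξ : ℝ) ≠ 0 := by positivity
    rw [h1] at h2
    push_cast at h2
    field_simp
    linarith [h2]
  -- riseFact γ n = γ * riseFact (1+γ) (n-1)
  have hsplit1 : riseFact γ n = γ * riseFact (1 + γ) (n - 1) := by
    have hn' : n = (n - 1) + 1 := (Nat.succ_pred_eq_of_pos hn1).symm
    rw [hn', riseFact, Finset.prod_range_succ']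
    simp only [Nat.cast_zero, add_zero]
    rw [riseFact, mul_comm]
    congr 1
    apply Finset.prod_congr rfl
    intro i _
    push_cast
    ring
  -- riseFact γ n = R * Q
  have hsplit2 : riseFact γ n = R * Q := by
    have hn' : n = (n - ξ) + ξ := (Nat.sub_add_cancel hn).symm
    rw [hn', riseFact, Finset.prod_range_add, hR, riseFact, hQ]
    congr 1
    apply Finset.prod_congr rfl
    intro i _
    push_cast [hcast]
    ring
  have hRpos : 0 < R := riseFact_pos hγ0 _
  have hQpos : 0 < Q := by
    apply Finset.prod_pos
    intro i _
    have : (0:ℝ) ≤ (n : ℝ) - ξ := by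
      rw [← hcast]; positivity
    positivity
  have hfac : (Nat.factorial ξ : ℝ) ≠ 0 := by positivity
  have hRQ : riseFact (1 + γ) (n - 1) = R * Q / γ := by
    rw [← hsplit2, hsplit1]
    field_simp
  rw [hchoose, hRQ, Finset.prod_div_distrib, ← hP, ← hQ, hL]
  field_simp
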